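/- arXiv:2506.20569 — 2 statements merged into one kernel-verified Lean document; each statement's English description precedes it below -/
import Mathlib

section
/- Let H be a Hilbert space, (e_k)_{k∈ℕ} a Riesz basis of H, and (f_k)_{k∈ℕ} a complete system in H with ∑_k ‖f_k - e_k‖² < ∞ and (f_k) ω-linearly independent. Then (f_k) is a Riesz basis of H. -/
/-!
Write `e k = T (b k)` with `b` a Hilbert basis and `T` invertible, and let `S` be the operator
`x ↦ ∑ ⟪b k, x⟫ g k` with `g k = T⁻¹ (f k - e k)`, so that `T (1 + S)` maps `b k` to `f k`.
Since `∑ ‖g k‖² < ∞`, `S` is a norm limit of finite-rank operators, hence compact. The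
ω-independence of `f` makes `T (1 + S)` injective, so by the Fredholm alternative `1 + S` is
invertible, and `f` is the image of `b` under the invertible operator `T (1 + S)`.
-/

open MeasureTheory

/-- A sequence is a Riesz basis of a Hilbert space if it is the image of a
Hilbert (orthonormal) basis under a bounded invertible operator. -/
def IsRieszBasis (H : Type*) [NormedAddCommGroup H] [InnerProductSpace ℂ H]
    [CompleteSpace H] (f : ℕ → H) : Prop :=
  ∃ (e : HilbertBasis ℕ ℂ H) (T : H ≃L[ℂ] H), ∀ k, f k = T (e k)

open Filter
open scoped InnerProductSpace

section
variable {𝕜 ι X : Type*} [NontriviallyNormedField 𝕜] [NormedAddCommGroup X] [NormedSpace 𝕜 X]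

theorem ContinuousLinearMap.summable_norm_apply_sq {F : Type*} [NormedAddCommGroup F]
    [NormedSpace 𝕜 F] (L : X →L[𝕜] F) {u : ι → X} (hu : Summable fun i => ‖u i‖ ^ 2) :
    Summable fun i => ‖L (u i)‖ ^ 2 :=
  .of_nonneg_of_le (fun _ => by positivity)
    (fun i => by
      rw [← mul_pow]
      exact pow_le_pow_left₀ (norm_nonneg _) (L.le_opNorm _) 2)
    (hu.mul_left (‖L‖ ^ 2))

theorem IsCompactOperator.isUnit_one_add_of_injective [CompleteSpace X] {T : X →L[𝕜] X}
    (hT : IsCompactOperator T) (hinj : Function.Injective ⇑(1 + T)) : IsUnit (1 + T) := by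
  have hnot : ¬ Module.End.HasEigenvalue ((-T : X →L[𝕜] X) : Module.End 𝕜 X) 1 := by
    intro h
    obtain ⟨x, hx, hx0⟩ := h.exists_hasEigenvector
    rw [Module.End.mem_eigenspace_iff] at hx
    refine hx0 (hinj ?_)
    simp only [ContinuousLinearMap.toLinearMap_neg, LinearMap.neg_apply,
      ContinuousLinearMap.coe_coe, one_smul] at hx
    change x + T x = (1 + T) 0
    rw [map_zero, neg_eq_iff_eq_neg.mp hx, add_neg_cancel]
  simpa [spectrum.mem_resolventSet_iff, sub_eq_add_neg] using
    (hT.neg.hasEigenvalue_or_mem_resolventSet one_ne_zero).resolve_left hnot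
end

section TsumInnerSMul
variable {𝕜 ι H E : Type*} [RCLike 𝕜] [NormedAddCommGroup H] [InnerProductSpace 𝕜 H]
  [NormedAddCommGroup E] {v : ι → H} {g : ι → E}

theorem Orthonormal.summable_and_tsum_norm_inner_mul_norm_le (hv : Orthonormal 𝕜 v)
    (hg : Summable fun i => ‖g i‖ ^ 2) (x : H) :
    (Summable fun i => ‖⟪v i, x⟫_𝕜‖ * ‖g i‖) ∧
      ∑' i, ‖⟪v i, x⟫_𝕜‖ * ‖g i‖ ≤ √(∑' i, ‖g i‖ ^ 2) * ‖x‖ := by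
  obtain ⟨hsum, hle⟩ := Real.summable_and_inner_le_Lp_mul_Lq_tsum_of_nonneg .two_two
    (fun i => norm_nonneg ⟪v i, x⟫_𝕜) (fun i => norm_nonneg (g i))
    (by simpa only [Real.rpow_two] using hv.inner_products_summable x) (by simpa only [Real.rpow_two] using hg)
  refine ⟨hsum, hle.trans ?_⟩
  simp only [Real.rpow_two, ← Real.sqrt_eq_rpow]
  rw [mul_comm]
  gcongr
  calc √(∑' i, ‖⟪v i, x⟫_𝕜‖ ^ 2) ≤ √(‖x‖ ^ 2) := Real.sqrt_le_sqrt (hv.tsum_inner_products_le x)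
    _ = ‖x‖ := Real.sqrt_sq (norm_nonneg x)

variable [NormedSpace 𝕜 E]

theorem Orthonormal.norm_tsum_inner_smul_le (hv : Orthonormal 𝕜 v)
    (hg : Summable fun i => ‖g i‖ ^ 2) (x : H) :
    ‖∑' i, ⟪v i, x⟫_𝕜 • g i‖ ≤ √(∑' i, ‖g i‖ ^ 2) * ‖x‖ := by
  obtain ⟨hsum, hle⟩ := hv.summable_and_tsum_norm_inner_mul_norm_le hg x
  refine (norm_tsum_le_tsum_norm ?_).trans ?_ <;> simpa only [norm_smul]

theorem HilbertBasis.injective_of_forall_hasSum_eq_zero (b : HilbertBasis ι 𝕜 H) (A : H →L[𝕜] E)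
    (h : ∀ c : ι → 𝕜, HasSum (fun i => c i • A (b i)) 0 → ∀ i, c i = 0) :
    Function.Injective A := by
  refine (injective_iff_map_eq_zero A).mpr fun x hx => ?_
  have hrepr : HasSum (fun i => b.repr x i • A (b i)) 0 := by
    simpa only [map_smul, hx] using (b.hasSum_repr x).mapL A
  have hzero : b.repr x = 0 := lp.ext (funext (h _ hrepr))
  simpa using congrArg b.repr.symm hzero

variable [CompleteSpace E]

theorem Orthonormal.summable_inner_smul (hv : Orthonormal 𝕜 v)
    (hg : Summable fun i => ‖g i‖ ^ 2) (x : H) : Summable fun i => ⟪v i, x⟫_𝕜 • g i :=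
  .of_norm <| by simpa only [norm_smul] using (hv.summable_and_tsum_norm_inner_mul_norm_le hg x).1

noncomputable def Orthonormal.tsumInnerSMul (hv : Orthonormal 𝕜 v)
    (hg : Summable fun i => ‖g i‖ ^ 2) : H →L[𝕜] E :=
  LinearMap.mkContinuous
    { toFun := fun x => ∑' i, ⟪v i, x⟫_𝕜 • g i
      map_add' := fun x y => by
        simp only [inner_add_right, add_smul]
        exact (hv.summable_inner_smul hg x).tsum_add (hv.summable_inner_smul hg y)
      map_smul' := fun c x => by
        simp only [inner_smul_right, mul_smul, RingHom.id_apply]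
        exact (hv.summable_inner_smul hg x).tsum_const_smul c }
    √(∑' i, ‖g i‖ ^ 2) (hv.norm_tsum_inner_smul_le hg)

theorem Orthonormal.tsumInnerSMul_apply (hv : Orthonormal 𝕜 v)
    (hg : Summable fun i => ‖g i‖ ^ 2) (x : H) :
    hv.tsumInnerSMul hg x = ∑' i, ⟪v i, x⟫_𝕜 • g i := rfl

theorem Orthonormal.tsumInnerSMul_apply_self (hv : Orthonormal 𝕜 v)
    (hg : Summable fun i => ‖g i‖ ^ 2) (j : ι) : hv.tsumInnerSMul hg (v j) = g j := by
  rw [hv.tsumInnerSMul_apply, tsum_eq_single j fun i hi => by rw [hv.inner_eq_zero hi, zero_smul],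
    inner_self_eq_norm_sq_to_K, hv.norm_eq_one, RCLike.ofReal_one, one_pow, one_smul]

theorem Orthonormal.norm_tsumInnerSMul_sub_sum_le (hv : Orthonormal 𝕜 v)
    (hg : Summable fun i => ‖g i‖ ^ 2) (s : Finset ι) :
    ‖hv.tsumInnerSMul hg - ∑ i ∈ s, (innerSL 𝕜 (v i)).smulRight (g i)‖ ≤
      √(∑' i : {i // i ∉ s}, ‖g i‖ ^ 2) := by
  refine ContinuousLinearMap.opNorm_le_bound _ (Real.sqrt_nonneg _) fun x => ?_
  have htail := (hv.comp _ Subtype.val_injective).norm_tsum_inner_smul_le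
    (hg.comp_injective (Subtype.val_injective (p := (· ∉ s)))) x
  have htail_eq : (hv.tsumInnerSMul hg - ∑ i ∈ s, (innerSL 𝕜 (v i)).smulRight (g i)) x =
      ∑' i : {i // i ∉ s}, ⟪v i, x⟫_𝕜 • g i := by
    rw [sub_apply, hv.tsumInnerSMul_apply,
      ← (hv.summable_inner_smul hg x).sum_add_tsum_subtype_compl s]
    simp
  exact htail_eq ▸ htail

theorem Orthonormal.isCompactOperator_tsumInnerSMul (hv : Orthonormal 𝕜 v)
    (hg : Summable fun i => ‖g i‖ ^ 2) : IsCompactOperator (hv.tsumInnerSMul hg) := by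
  refine isCompactOperator_of_tendsto (l := atTop)
    (F := fun s : Finset ι => ∑ i ∈ s, (innerSL 𝕜 (v i)).smulRight (g i)) ?_ (.of_forall ?_)
  · rw [tendsto_iff_norm_sub_tendsto_zero]
    refine squeeze_zero (g := fun s => √(∑' i : {i // i ∉ s}, ‖g i‖ ^ 2))
      (fun _ => norm_nonneg _) (fun s => ?_) ?_
    · rw [norm_sub_rev]
      exact hv.norm_tsumInnerSMul_sub_sum_le hg s
    · simpa using (tendsto_tsum_compl_atTop_zero fun i => ‖g i‖ ^ 2).sqrt
  · intro s
    -- each rank-one term `x ↦ ⟪v i, x⟫ • g i` factors through the locally compact field `𝕜`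
    refine Submodule.sum_mem (compactOperator (RingHom.id 𝕜) H E) fun i _ => ?_
    exact (isCompactOperator_of_locallyCompactSpace_dom (innerSL 𝕜 (v i))).continuous_comp
      (continuous_id.smul continuous_const)
end TsumInnerSMul

theorem stmt_14_general (H : Type*) [NormedAddCommGroup H] [InnerProductSpace ℂ H]
    [CompleteSpace H] (e f : ℕ → H)
    (he : IsRieszBasis H e)
    (hclose : Summable (fun k => ‖f k - e k‖ ^ 2))
    (hω : ∀ c : ℕ → ℂ, HasSum (fun k => c k • f k) 0 → ∀ k, c k = 0) :
    IsRieszBasis H f := by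
  obtain ⟨b, T, hT⟩ := he
  have hg := (T.symm : H →L[ℂ] H).summable_norm_apply_sq hclose
  set S := b.orthonormal.tsumInnerSMul hg
  have hA : ∀ k, (T : H →L[ℂ] H) ((1 + S) (b k)) = f k := fun k => by
    simp [S, Orthonormal.tsumInnerSMul_apply_self, hT]
  have hinj : Function.Injective ((T : H →L[ℂ] H) ∘L (1 + S)) :=
    b.injective_of_forall_hasSum_eq_zero _ (by simpa only [ContinuousLinearMap.comp_apply, hA])
  obtain ⟨u, hu⟩ := (b.orthonormal.isCompactOperator_tsumInnerSMul hg).isUnit_one_add_of_injective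
    (hinj.of_comp (f := (T : H →L[ℂ] H)))
  exact ⟨b, (ContinuousLinearEquiv.unitsEquiv ℂ H u).trans T, fun k => by rw [← hA k, ← hu]; rfl⟩

theorem stmt_14 (H : Type*) [NormedAddCommGroup H] [InnerProductSpace ℂ H]
    [CompleteSpace H] (e f : ℕ → H)
    (he : IsRieszBasis H e)
    (hcomplete : (Submodule.span ℂ (Set.range f)).topologicalClosure = ⊤)
    (hclose : Summable (fun k => ‖f k - e k‖ ^ 2))
    (hω : ∀ c : ℕ → ℂ, HasSum (fun k => c k • f k) 0 → ∀ k, c k = 0) :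
    IsRieszBasis H f :=
  stmt_14_general H e f he hclose hω
end

section
/- Suppose q ∈ L²(0,π) and for every n ∈ ℕ, ∑_{k=1}^{n_p} sin(n·a_k) ≠ 0, and suppose the values ∫₀^π N(x)·cos(nx) dx are known for all n ∈ ℕ, where N satisfies ∫₀^π N(x)·cos(ρx) dx = -sin(ρπ)·∑_k ∫₀^{a_k} q(t)·sin(ρ(a_k - t)) dt + (∑_k sin(ρa_k))·∫₀^π q(t)·sin(ρ(π - t)) dt for all real ρ. Then the Fourier sine coefficients c_n = ∫₀^π q(t)·sin(n(π - t)) dt are uniquely determined by c_n = (∑_k sin(n·a_k))^{-1}·∫₀^π N(x)·cos(nx) dx, and hence q is uniquely determined in L²(0,π). -/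
/-!
At an integer `ρ = n` the first term of the relation defining `N` vanishes because
`sin (n π) = 0`, so the relation returns the coefficient of `q` against
`sin (n (π - t)) = (-1)^(n+1) sin (n t)`. Equal data therefore make `q₁ - q₂` orthogonal to every
`sin (n t)` on `(0, π)`. The odd extension of `q₁ - q₂` to `(-π, π]` then has vanishing Fourier
coefficients, so it is zero in `L²` by Parseval's identity.
-/

open MeasureTheory Real Set Complex

theorem ae_eq_zero_of_fourierCoeffOn_eq_zero {a b : ℝ} (hab : a < b) {f : ℝ → ℂ}
    (hf : MemLp f 2 (volume.restrict (Ioc a b))) (h : ∀ n, fourierCoeffOn hab f n = 0) :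
    f =ᵐ[volume.restrict (Ioc a b)] 0 := by
  have hsum := hasSum_sq_fourierCoeffOn hab hf
  simp only [h, norm_zero, ne_eq, OfNat.ofNat_ne_zero, not_false_eq_true, zero_pow] at hsum
  have hint : ∫ x in a..b, ‖f x‖ ^ 2 = 0 := by
    have := (hasSum_zero.unique hsum).symm
    rwa [smul_eq_mul, mul_eq_zero, inv_eq_zero, sub_eq_zero, or_iff_right hab.ne'] at this
  rw [intervalIntegral.integral_of_le hab.le, integral_eq_zero_iff_of_nonneg
    (fun x => by positivity) (hf.integrable_norm_pow two_ne_zero)] at hint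
  filter_upwards [hint] with x hx
  simpa using hx

theorem integral_exp_mul_of_odd {c : ℝ} {G : ℝ → ℂ} (hodd : ∀ x, G (-x) = -G x)
    (hG : IntervalIntegrable G volume (-c) c) (ν : ℝ) :
    ∫ x in -c..c, exp (-(ν * x) * I) * G x =
      -2 * I * ∫ x in 0..c, (Real.sin (ν * x) : ℂ) * G x := by
  set F : ℝ → ℂ := fun x => exp (-(ν * x) * I) * G x
  have hF : ∀ a b, a ∈ uIcc (-c) c → b ∈ uIcc (-c) c → IntervalIntegrable F volume a b :=
    fun a b ha hb => (hG.mono_set (uIcc_subset_uIcc ha hb)).continuousOn_mul (by fun_prop)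
  have h0 : (0 : ℝ) ∈ uIcc (-c) c := by
    rcases le_total 0 c with hc | hc <;> exact ⟨by simp [hc], by simp [hc]⟩
  have hFneg : IntervalIntegrable (fun x => F (-x)) volume 0 c := by
    simpa using ((IntervalIntegrable.iff_comp_neg (f := F)).mp (hF (-c) 0 left_mem_uIcc h0)).symm
  calc ∫ x in -c..c, F x = (∫ x in -c..0, F x) + ∫ x in 0..c, F x :=
        (intervalIntegral.integral_add_adjacent_intervals (hF _ _ left_mem_uIcc h0)
          (hF _ _ h0 right_mem_uIcc)).symm
    _ = ∫ x in 0..c, (F (-x) + F x) := by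
        rw [intervalIntegral.integral_add hFneg (hF _ _ h0 right_mem_uIcc),
          intervalIntegral.integral_comp_neg, neg_zero]
    _ = ∫ x in 0..c, -2 * I * ((Real.sin (ν * x) : ℂ) * G x) := by
        refine intervalIntegral.integral_congr fun x _ => ?_
        simp only [F, hodd]
        push_cast
        simp only [Complex.sin, neg_mul, neg_neg, mul_neg]
        linear_combination (exp (-(ν * x * I)) - exp (ν * x * I)) * G x * I_sq
    _ = _ := intervalIntegral.integral_const_mul _ _

theorem fourier_neg_coe_eq_exp (n : ℤ) (x : ℝ) :
    fourier (-n) (x : AddCircle (π - -π)) = exp (-(((n : ℝ) : ℂ) * x) * I) := by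
  rw [fourier_coe_apply]
  congr 1
  push_cast
  field_simp
  ring

theorem fourierCoeffOn_of_odd {G : ℝ → ℂ} (hodd : ∀ x, G (-x) = -G x)
    (hG : IntervalIntegrable G volume (-π) π) (n : ℤ) :
    fourierCoeffOn (neg_lt_self pi_pos) G n =
      -(I / π) * ∫ x in 0..π, (Real.sin (n * x) : ℂ) * G x := by
  simp_rw [fourierCoeffOn_eq_integral, fourier_neg_coe_eq_exp, smul_eq_mul]
  rw [integral_exp_mul_of_odd hodd hG, real_smul]
  push_cast
  field_simp
  ring

theorem integral_mul_sin_int_eq_zero {g : ℝ → ℝ}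
    (h : ∀ n : ℕ, 1 ≤ n → ∫ t in 0..π, g t * Real.sin (n * t) = 0) (n : ℤ) :
    ∫ t in 0..π, g t * Real.sin (n * t) = 0 := by
  obtain ⟨m, rfl | rfl⟩ := Int.eq_nat_or_neg n
  all_goals
    rcases Nat.eq_zero_or_pos m with rfl | hm
    · simp
    · simpa [Real.sin_neg] using h m hm

theorem ae_eq_zero_of_integral_mul_sin_eq_zero {g : ℝ → ℝ}
    (hg : MemLp g 2 (volume.restrict (Ioo 0 π)))
    (h : ∀ n : ℕ, 1 ≤ n → ∫ t in 0..π, g t * Real.sin (n * t) = 0) :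
    ∀ᵐ t ∂(volume.restrict (Ioo 0 π)), g t = 0 := by
  set g₀ := (Ioc 0 π).indicator g
  -- the odd extension of `g`, as `g₀` vanishes off `(0, π]`
  set G : ℝ → ℂ := fun t => ((g₀ t - g₀ (-t) : ℝ) : ℂ)
  have hg₀ : MemLp g₀ 2 volume := by
    rwa [memLp_indicator_iff_restrict measurableSet_Ioc, ← Measure.restrict_congr_set Ioo_ae_eq_Ioc]
  have hG : MemLp G 2 volume :=
    (hg₀.sub (hg₀.comp_measurePreserving (Measure.measurePreserving_neg volume))).ofReal
  have hodd : ∀ x, G (-x) = -G x := fun x => by simp [G]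
  have hGg : ∀ x ∈ Ioc 0 π, G x = g x := fun x hx => by
    have : -x ∉ Ioc 0 π := fun h' => by linarith [hx.1, h'.1]
    simp [G, g₀, hx, this]
  have hcoeff : ∀ n, fourierCoeffOn (neg_lt_self pi_pos) G n = 0 := fun n => by
    have hGint : IntervalIntegrable G volume (-π) π :=
      ((hG.locallyIntegrable one_le_two).integrableOn_isCompact isCompact_uIcc).intervalIntegrable
    have hsin : ∫ x in 0..π, (Real.sin (n * x) : ℂ) * G x =
        ∫ x in 0..π, ((g x * Real.sin (n * x) : ℝ) : ℂ) := by
      refine intervalIntegral.integral_congr_ae (Filter.Eventually.of_forall fun x hx => ?_)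
      rw [uIoc_of_le pi_pos.le] at hx
      rw [hGg x hx]
      push_cast
      ring
    rw [fourierCoeffOn_of_odd hodd hGint, hsin, intervalIntegral.integral_ofReal,
      integral_mul_sin_int_eq_zero h, ofReal_zero, mul_zero]
  have hzero := ae_eq_zero_of_fourierCoeffOn_eq_zero _ (hG.restrict _) hcoeff
  have hsub : Ioo 0 π ⊆ Ioc (-π) π := fun x hx => ⟨by linarith [hx.1, pi_pos], hx.2.le⟩
  filter_upwards [ae_restrict_of_ae_restrict_of_subset hsub hzero,
    ae_restrict_mem measurableSet_Ioo] with x hx hxI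
  have : (g x : ℂ) = 0 := (hGg x (Ioo_subset_Ioc_self hxI)).symm.trans hx
  exact_mod_cast this

theorem intervalIntegrable_mul_of_memLp_Ioo {a b : ℝ} (hab : a ≤ b) {p : ENNReal} (hp : 1 ≤ p)
    {f g : ℝ → ℝ} (hf : MemLp f p (volume.restrict (Ioo a b))) (hg : Continuous g) :
    IntervalIntegrable (fun t => f t * g t) volume a b := by
  have : IsFiniteMeasure (volume.restrict (Ioo a b)) :=
    isFiniteMeasure_restrict.2 measure_Ioo_lt_top.ne
  have hfi : IntervalIntegrable f volume a b :=
    (intervalIntegrable_iff_integrableOn_Ioo_of_le hab).2 (hf.integrable hp)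
  exact hfi.mul_continuousOn hg.continuousOn

theorem integral_mul_sin_nat_mul_pi_sub (g : ℝ → ℝ) (n : ℕ) :
    ∫ t in 0..π, g t * Real.sin (n * (π - t)) =
      -(-1) ^ n * ∫ t in 0..π, g t * Real.sin (n * t) := by
  simp_rw [mul_sub, Real.sin_nat_mul_pi_sub, ← intervalIntegral.integral_const_mul]
  congr 1 with t
  ring

theorem integral_mul_sin_eq_of_cosine_relation {m : ℕ} {a : Fin m → ℝ} {q N : ℝ → ℝ} {n : ℕ}
    (hN : ∫ x in 0..π, N x * Real.cos (n * x) =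
      -Real.sin (n * π) * ∑ k, (∫ t in 0..(a k), q t * Real.sin (n * (a k - t)))
        + (∑ k, Real.sin (n * a k)) * ∫ t in 0..π, q t * Real.sin (n * (π - t)))
    (hn : ∑ k, Real.sin (n * a k) ≠ 0) :
    ∫ t in 0..π, q t * Real.sin (n * (π - t)) =
      (∑ k, Real.sin (n * a k))⁻¹ * ∫ x in 0..π, N x * Real.cos (n * x) := by
  rw [hN, Real.sin_nat_mul_pi, neg_zero, zero_mul, zero_add, inv_mul_cancel_left₀ hn]

theorem stmt_16_general (m : ℕ) (a : Fin m → ℝ)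
    (hsin : ∀ n : ℕ, 1 ≤ n → (∑ k, Real.sin (n * a k)) ≠ 0)
    (q₁ q₂ : ℝ → ℝ)
    (hq₁ : MemLp q₁ 2 (volume.restrict (Set.Ioo 0 π)))
    (hq₂ : MemLp q₂ 2 (volume.restrict (Set.Ioo 0 π)))
    (N₁ N₂ : ℝ → ℝ)
    (hN₁ : ∀ ρ : ℝ, ∫ x in (0:ℝ)..π, N₁ x * Real.cos (ρ * x) =
      -Real.sin (ρ * π) * ∑ k, (∫ t in (0:ℝ)..(a k), q₁ t * Real.sin (ρ * (a k - t)))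
        + (∑ k, Real.sin (ρ * a k)) * ∫ t in (0:ℝ)..π, q₁ t * Real.sin (ρ * (π - t)))
    (hN₂ : ∀ ρ : ℝ, ∫ x in (0:ℝ)..π, N₂ x * Real.cos (ρ * x) =
      -Real.sin (ρ * π) * ∑ k, (∫ t in (0:ℝ)..(a k), q₂ t * Real.sin (ρ * (a k - t)))
        + (∑ k, Real.sin (ρ * a k)) * ∫ t in (0:ℝ)..π, q₂ t * Real.sin (ρ * (π - t)))
    (hdata : ∀ n : ℕ, (∫ x in (0:ℝ)..π, N₁ x * Real.cos (n * x)) =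
      ∫ x in (0:ℝ)..π, N₂ x * Real.cos (n * x)) :
    (∀ n : ℕ, 1 ≤ n →
      (∫ t in (0:ℝ)..π, q₁ t * Real.sin (n * (π - t))) =
        (∑ k, Real.sin (n * a k))⁻¹ * ∫ x in (0:ℝ)..π, N₁ x * Real.cos (n * x)) ∧
    ∀ᵐ t ∂(volume.restrict (Set.Ioo 0 π)), q₁ t = q₂ t := by
  have hcoeff₁ (n : ℕ) (hn : 1 ≤ n) := integral_mul_sin_eq_of_cosine_relation (hN₁ n) (hsin n hn)
  have hcoeff₂ (n : ℕ) (hn : 1 ≤ n) := integral_mul_sin_eq_of_cosine_relation (hN₂ n) (hsin n hn)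
  refine ⟨hcoeff₁, ?_⟩
  have horth : ∀ n : ℕ, 1 ≤ n → ∫ t in 0..π, (q₁ t - q₂ t) * Real.sin (n * t) = 0 := by
    intro n hn
    have hcont : Continuous fun t => Real.sin (n * (π - t)) := by fun_prop
    have hrefl : ∫ t in 0..π, (q₁ t - q₂ t) * Real.sin (n * (π - t)) = 0 := by
      simp_rw [sub_mul]
      rw [intervalIntegral.integral_sub
        (intervalIntegrable_mul_of_memLp_Ioo pi_pos.le one_le_two hq₁ hcont)
        (intervalIntegrable_mul_of_memLp_Ioo pi_pos.le one_le_two hq₂ hcont),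
        hcoeff₁ n hn, hcoeff₂ n hn, hdata, sub_self]
    rw [integral_mul_sin_nat_mul_pi_sub] at hrefl
    exact (mul_eq_zero.1 hrefl).resolve_left (by simp)
  filter_upwards [ae_eq_zero_of_integral_mul_sin_eq_zero (hq₁.sub hq₂) horth] with t ht
  exact sub_eq_zero.1 ht

theorem stmt_16 (m : ℕ) (a : Fin m → ℝ)
    (ha : StrictMono a) (ha0 : ∀ k, 0 < a k) (haπ : ∀ k, a k < π)
    (hsin : ∀ n : ℕ, 1 ≤ n → (∑ k, Real.sin (n * a k)) ≠ 0)
    (q₁ q₂ : ℝ → ℝ)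
    (hq₁ : MemLp q₁ 2 (volume.restrict (Set.Ioo 0 π)))
    (hq₂ : MemLp q₂ 2 (volume.restrict (Set.Ioo 0 π)))
    (N₁ N₂ : ℝ → ℝ)
    (hN₁ : ∀ ρ : ℝ, ∫ x in (0:ℝ)..π, N₁ x * Real.cos (ρ * x) =
      -Real.sin (ρ * π) * ∑ k, (∫ t in (0:ℝ)..(a k), q₁ t * Real.sin (ρ * (a k - t)))
        + (∑ k, Real.sin (ρ * a k)) * ∫ t in (0:ℝ)..π, q₁ t * Real.sin (ρ * (π - t)))
    (hN₂ : ∀ ρ : ℝ, ∫ x in (0:ℝ)..π, N₂ x * Real.cos (ρ * x) =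
      -Real.sin (ρ * π) * ∑ k, (∫ t in (0:ℝ)..(a k), q₂ t * Real.sin (ρ * (a k - t)))
        + (∑ k, Real.sin (ρ * a k)) * ∫ t in (0:ℝ)..π, q₂ t * Real.sin (ρ * (π - t)))
    (hdata : ∀ n : ℕ, (∫ x in (0:ℝ)..π, N₁ x * Real.cos (n * x)) =
      ∫ x in (0:ℝ)..π, N₂ x * Real.cos (n * x)) :
    (∀ n : ℕ, 1 ≤ n →
      (∫ t in (0:ℝ)..π, q₁ t * Real.sin (n * (π - t))) =
        (∑ k, Real.sin (n * a k))⁻¹ * ∫ x in (0:ℝ)..π, N₁ x * Real.cos (n * x)) ∧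
    ∀ᵐ t ∂(volume.restrict (Set.Ioo 0 π)), q₁ t = q₂ t :=
  stmt_16_general m a hsin q₁ q₂ hq₁ hq₂ N₁ N₂ hN₁ hN₂ hdata
end
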